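/- arXiv:2412.18782 — 5 statements merged into one kernel-verified Lean document; each statement's English description precedes it below -/
import Mathlib

section
/- Let a ≠ 0 and suppose (β_n) satisfies a²(2β_n − n)² = β_n(2β_{n−1} + 2β_n − 2n + 1)(2β_n + 2β_{n+1} − 2n − 1) for all n ≥ 1. Define w_n := 4β_n/a², z_n := −2/a² + 4n/a², and C₃ := 2/a². Then (w_{n+1} + w_n − z_{n+1})(w_n + w_{n−1} − z_n)·w_n = (2w_n − C₃ − z_n)(2w_n + C₃ − z_{n+1}) for all n ≥ 1. -/
/-! Each factor of the equation in `w` is `2 / a²` or `4 / a²` times the matching factor of the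
equation for `β`, so the claim is that equation multiplied by `16 / a⁶`. -/

theorem stmt_2 (a : ℝ) (ha : a ≠ 0) (β : ℕ → ℝ)
    (hde : ∀ n : ℕ, 1 ≤ n →
      a ^ 2 * (2 * β n - n) ^ 2 =
        β n * (2 * β (n - 1) + 2 * β n - 2 * n + 1) *
          (2 * β n + 2 * β (n + 1) - 2 * n - 1))
    (w z : ℕ → ℝ) (C₃ : ℝ)
    (hw : ∀ n : ℕ, w n = 4 * β n / a ^ 2)
    (hz : ∀ n : ℕ, z n = -2 / a ^ 2 + 4 * n / a ^ 2)
    (hC : C₃ = 2 / a ^ 2) :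
    ∀ n : ℕ, 1 ≤ n →
      (w (n + 1) + w n - z (n + 1)) * (w n + w (n - 1) - z n) * w n =
        (2 * w n - C₃ - z n) * (2 * w n + C₃ - z (n + 1)) := by
  intro n hn
  have hforward : w (n + 1) + w n - z (n + 1) =
      2 * (2 * β n + 2 * β (n + 1) - 2 * n - 1) / a ^ 2 := by
    rw [hw, hw, hz]; push_cast; ring
  have hbackward : w n + w (n - 1) - z n =
      2 * (2 * β (n - 1) + 2 * β n - 2 * n + 1) / a ^ 2 := by
    rw [hw, hw, hz]; ring
  have hminus : 2 * w n - C₃ - z n = 4 * (2 * β n - n) / a ^ 2 := by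
    rw [hw, hz, hC]; ring
  have hplus : 2 * w n + C₃ - z (n + 1) = 4 * (2 * β n - n) / a ^ 2 := by
    rw [hw, hz, hC]; push_cast; ring
  rw [hforward, hbackward, hminus, hplus, hw]
  have ha2 : a ^ 2 ≠ 0 := pow_ne_zero 2 ha
  calc _ = 16 * (β n * (2 * β (n - 1) + 2 * β n - 2 * n + 1) *
          (2 * β n + 2 * β (n + 1) - 2 * n - 1)) / (a ^ 2) ^ 3 := by ring
    _ = 16 * (a ^ 2 * (2 * β n - n) ^ 2) / (a ^ 2) ^ 3 := by rw [hde n hn]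
    _ = _ := by field_simp; ring
end

section
/- Let a ∈ ℝ and let (β_n), (r_n), (R_n), (p_n) be real sequences satisfying: r_n = 2β_n − n; R_n = 2β_n + 2β_{n+1} − 2n − 1; p_n = −(1/4)·(Σ_{j=0}^{n−1} R_j) + r_n/4 − n(n−1)/4; and r_n² + 2a²r_n + Σ_{j=0}^{n−1} R_j = 2β_n(R_{n−1} + R_n) for all n ≥ 1. Then p_n = −(1/2)n a² − β_n(β_{n−1} + β_n + β_{n+1} − n − a² − 1/2). -/
theorem stmt_4 (a : ℝ) (β r R p : ℕ → ℝ)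
    (h1 : ∀ n : ℕ, r n = 2 * β n - n)
    (h2 : ∀ n : ℕ, R n = 2 * β n + 2 * β (n + 1) - 2 * n - 1)
    (h3 : ∀ n : ℕ, 1 ≤ n →
      p n = -(1 / 4) * (∑ j ∈ Finset.range n, R j) + r n / 4 -
        (n : ℝ) * ((n : ℝ) - 1) / 4)
    (h4 : ∀ n : ℕ, 1 ≤ n →
      (r n) ^ 2 + 2 * a ^ 2 * r n + (∑ j ∈ Finset.range n, R j) =
        2 * β n * (R (n - 1) + R n)) :
    ∀ n : ℕ, 1 ≤ n →
      p n = -(1 / 2) * n * a ^ 2 -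
        β n * (β (n - 1) + β n + β (n + 1) - n - a ^ 2 - 1 / 2) := by
  intro n hn
  obtain ⟨m, rfl⟩ : ∃ m, n = m + 1 := Nat.exists_eq_add_of_le' hn
  have sum_eq : ∑ j ∈ Finset.range (m + 1), R j =
      2 * β (m + 1) * (R m + R (m + 1)) - r (m + 1) ^ 2 - 2 * a ^ 2 * r (m + 1) := by
    have h := h4 (m + 1) hn
    rw [Nat.add_sub_cancel] at h
    linarith
  rw [h3 (m + 1) hn, sum_eq, Nat.add_sub_cancel, h1, h2 m, h2 (m + 1)]
  push_cast
  ring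
end

section
/- Let β_n, R_n be differentiable real functions of a satisfying a·β_n′(a) = β_n(R_{n−1} − R_n) and R_n = 4(β_{n−1}β_n + (β_n+β_{n+1})² + β_{n+1}β_{n+2}) − 2n − 1 for all n ≥ 2. Then a·β_n′(a) = 2β_n[2β_{n−1}(β_{n−2}+β_{n−1}+β_n) − 2β_{n+1}(β_n+β_{n+1}+β_{n+2}) + 1]. -/
/-- The string equation of the quartic Freud weight, solved for `R n`. -/
def freudR (b : ℕ → ℝ) (n : ℕ) : ℝ :=
  4 * (b (n - 1) * b n + (b n + b (n + 1)) ^ 2 + b (n + 1) * b (n + 2)) - 2 * n - 1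

lemma freudR_pred_sub_freudR (b : ℕ → ℝ) {n : ℕ} (hn : 2 ≤ n) :
    freudR b (n - 1) - freudR b n =
      2 * (2 * b (n - 1) * (b (n - 2) + b (n - 1) + b n) -
        2 * b (n + 1) * (b n + b (n + 1) + b (n + 2)) + 1) := by
  obtain ⟨m, rfl⟩ : ∃ m, n = m + 2 := ⟨n - 2, by omega⟩
  simp only [freudR, show m + 2 - 1 = m + 1 from rfl, show m + 1 - 1 = m from rfl,
    show m + 2 - 2 = m from rfl]
  push_cast
  ring

theorem stmt_8_general (a : ℝ) (β R : ℕ → ℝ → ℝ)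
    (htoda : ∀ n : ℕ, 2 ≤ n →
      a * deriv (β n) a = β n a * (R (n - 1) a - R n a))
    (hR : ∀ n : ℕ, 1 ≤ n →
      R n a = 4 * (β (n - 1) a * β n a + (β n a + β (n + 1) a) ^ 2 +
        β (n + 1) a * β (n + 2) a) - 2 * n - 1) :
    ∀ n : ℕ, 2 ≤ n →
      a * deriv (β n) a =
        2 * β n a *
          (2 * β (n - 1) a * (β (n - 2) a + β (n - 1) a + β n a) -
            2 * β (n + 1) a * (β n a + β (n + 1) a + β (n + 2) a) + 1) := by
  intro n hn
  have hR' : ∀ k, 1 ≤ k → R k a = freudR (fun j => β j a) k := hR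
  rw [htoda n hn, hR' (n - 1) (by omega), hR' n (by omega),
    freudR_pred_sub_freudR _ hn]
  ring

theorem stmt_8 (a : ℝ) (β R : ℕ → ℝ → ℝ)
    (hβd : ∀ n : ℕ, Differentiable ℝ (β n))
    (hRd : ∀ n : ℕ, Differentiable ℝ (R n))
    (htoda : ∀ n : ℕ, 2 ≤ n →
      a * deriv (β n) a = β n a * (R (n - 1) a - R n a))
    (hR : ∀ n : ℕ, 1 ≤ n →
      R n a = 4 * (β (n - 1) a * β n a + (β n a + β (n + 1) a) ^ 2 +
        β (n + 1) a * β (n + 2) a) - 2 * n - 1) :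
    ∀ n : ℕ, 2 ≤ n →
      a * deriv (β n) a =
        2 * β n a *
          (2 * β (n - 1) a * (β (n - 2) a + β (n - 1) a + β n a) -
            2 * β (n + 1) a * (β n a + β (n + 1) a + β (n + 2) a) + 1) :=
  stmt_8_general a β R htoda hR
end

section
/- Let a ∈ ℝ and let (β_n), (r_n), (R_n), (p_n) be real sequences satisfying: Σ_{j=0}^{n−1}(β_j + β_{j+1}) = −2p_n + β_n; r_n(a² + 2β_n) + Σ_{j=0}^{n−1}(β_j + β_{j+1}) = β_n[R_{n−1} + R_n + 4(β_{n−1}+β_n)(β_n+β_{n+1})]; r_n = 4β_n(β_{n−1}+β_n+β_{n+1}) − n; and R_n = 4(β_{n−1}β_n + (β_n+β_{n+1})² + β_{n+1}β_{n+2}) − 2n − 1. Then p_n = −(1/2)n a² − 2β_n[β_{n−1}(β_{n−2}+β_{n−1}+2β_n+β_{n+1}−a²) + (β_n+β_{n+1})(β_n+β_{n+1}−a²) + β_{n+1}β_{n+2} − n/2 − 1/4]. -/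
/-! Eliminating the partial sum `∑ (β j + β (j + 1))` between the two identities for `p n` and
the sum, and substituting the closed forms of `r n`, `R (n - 1)` and `R n`, leaves an identity
that is linear in the remaining unknowns. -/

-- `bᵢ` stands for `β (n - 2 + i)`, `N` for `n`, and `S` for the partial sum.
theorem p_eq_of_recurrences {a N b₀ b₁ b₂ b₃ b₄ p S r R₁ R₂ : ℝ}
    (hS : S = -2 * p + b₂)
    (hstr : r * (a ^ 2 + 2 * b₂) + S = b₂ * (R₁ + R₂ + 4 * (b₁ + b₂) * (b₂ + b₃)))
    (hr : r = 4 * b₂ * (b₁ + b₂ + b₃) - N)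
    (hR₁ : R₁ = 4 * (b₀ * b₁ + (b₁ + b₂) ^ 2 + b₂ * b₃) - 2 * (N - 1) - 1)
    (hR₂ : R₂ = 4 * (b₁ * b₂ + (b₂ + b₃) ^ 2 + b₃ * b₄) - 2 * N - 1) :
    p = -(1 / 2) * N * a ^ 2 -
      2 * b₂ * (b₁ * (b₀ + b₁ + 2 * b₂ + b₃ - a ^ 2) + (b₂ + b₃) * (b₂ + b₃ - a ^ 2) +
        b₃ * b₄ - N / 2 - 1 / 4) := by
  subst hS hr hR₁ hR₂
  linear_combination (-1 / 2 : ℝ) * hstr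

theorem stmt_9 (a : ℝ) (β r R p : ℕ → ℝ)
    (h1 : ∀ n : ℕ, 2 ≤ n →
      (∑ j ∈ Finset.range n, (β j + β (j + 1))) = -2 * p n + β n)
    (h2 : ∀ n : ℕ, 2 ≤ n →
      r n * (a ^ 2 + 2 * β n) + (∑ j ∈ Finset.range n, (β j + β (j + 1))) =
        β n * (R (n - 1) + R n +
          4 * (β (n - 1) + β n) * (β n + β (n + 1))))
    (h3 : ∀ n : ℕ, 1 ≤ n →
      r n = 4 * β n * (β (n - 1) + β n + β (n + 1)) - n)
    (h4 : ∀ n : ℕ, 1 ≤ n →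
      R n = 4 * (β (n - 1) * β n + (β n + β (n + 1)) ^ 2 +
        β (n + 1) * β (n + 2)) - 2 * n - 1) :
    ∀ n : ℕ, 2 ≤ n →
      p n = -(1 / 2) * n * a ^ 2 -
        2 * β n *
          (β (n - 1) * (β (n - 2) + β (n - 1) + 2 * β n + β (n + 1) - a ^ 2) +
            (β n + β (n + 1)) * (β n + β (n + 1) - a ^ 2) +
            β (n + 1) * β (n + 2) - (n : ℝ) / 2 - 1 / 4) := by
  intro n hn
  obtain ⟨m, rfl⟩ := Nat.exists_eq_add_of_le' hn
  refine p_eq_of_recurrences (h1 _ hn) (h2 _ hn) (h3 _ (by omega)) ?_ (h4 _ (by omega))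
  rw [show m + 2 - 1 = m + 1 from rfl, h4 (m + 1) (by omega)]
  simp only [Nat.add_sub_cancel]
  push_cast
  ring
end

section
/- Let β_n, R_n be differentiable real functions of a satisfying a·β_n′(a) = β_n(R_{n−1} − R_n), where R_n = 6β_n[β_{n−2}β_{n−1} + (β_n+β_{n+1})² + β_{n−1}(β_{n−1}+2β_n+β_{n+1}) + β_{n+1}β_{n+2}] + 6β_{n+1}[β_{n−1}β_n + (β_{n+1}+β_{n+2})² + β_n(β_n+2β_{n+1}+β_{n+2}) + β_{n+2}β_{n+3}] − 2n − 1. Then a·β_n′(a) = 2β_n[3β_{n−1}(β_{n−3}β_{n−2} + (β_{n−1}+β_n)² + β_{n−2}(β_{n−2}+2β_{n−1}+β_n) + β_nβ_{n+1}) − 3β_{n+1}(β_{n−1}β_n + (β_{n+1}+β_{n+2})² + β_n(β_n+2β_{n+1}+β_{n+2}) + β_{n+2}β_{n+3}) + 1]. -/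
/-!
The bracket `S_n` multiplying `6 β_n` in `R_n` reappears, shifted by one, as the bracket
multiplying `6 β_{n+1}`, so `R_n = 6 (c_n + c_{n+1}) - 2n - 1` with `c_n = β_n S_n`.
Hence `R_{n-1} - R_n = 6 (c_{n-1} - c_{n+1}) + 2` telescopes, and substituting this into
the Toda-type equation `a β_n' = β_n (R_{n-1} - R_n)` gives the claim.
-/

def freudBracket (b : ℕ → ℝ) (n : ℕ) : ℝ :=
  b (n - 2) * b (n - 1) + (b n + b (n + 1)) ^ 2 +
    b (n - 1) * (b (n - 1) + 2 * b n + b (n + 1)) + b (n + 1) * b (n + 2)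

lemma sub_succ_eq_of_eq_pairSum {r c : ℕ → ℝ} {n : ℕ}
    (h₀ : r n = 6 * (c n + c (n + 1)) - 2 * n - 1)
    (h₁ : r (n + 1) = 6 * (c (n + 1) + c (n + 2)) - 2 * (n + 1 : ℕ) - 1) :
    r n - r (n + 1) = 6 * (c n - c (n + 2)) + 2 := by
  rw [h₀, h₁]
  push_cast
  ring

theorem stmt_14_general (a : ℝ) (β R : ℕ → ℝ → ℝ)
    (htoda : ∀ n : ℕ, 3 ≤ n →
      a * deriv (β n) a = β n a * (R (n - 1) a - R n a))
    (hR : ∀ n : ℕ, 2 ≤ n →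
      R n a = 6 * β n a * (β (n - 2) a * β (n - 1) a +
          (β n a + β (n + 1) a) ^ 2 +
          β (n - 1) a * (β (n - 1) a + 2 * β n a + β (n + 1) a) +
          β (n + 1) a * β (n + 2) a) +
        6 * β (n + 1) a * (β (n - 1) a * β n a +
          (β (n + 1) a + β (n + 2) a) ^ 2 +
          β n a * (β n a + 2 * β (n + 1) a + β (n + 2) a) +
          β (n + 2) a * β (n + 3) a) - 2 * n - 1) :
    ∀ n : ℕ, 3 ≤ n →
      a * deriv (β n) a =
        2 * β n a *
          (3 * β (n - 1) a * (β (n - 3) a * β (n - 2) a +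
              (β (n - 1) a + β n a) ^ 2 +
              β (n - 2) a * (β (n - 2) a + 2 * β (n - 1) a + β n a) +
              β n a * β (n + 1) a) -
            3 * β (n + 1) a * (β (n - 1) a * β n a +
              (β (n + 1) a + β (n + 2) a) ^ 2 +
              β n a * (β n a + 2 * β (n + 1) a + β (n + 2) a) +
              β (n + 2) a * β (n + 3) a) + 1) := by
  set c : ℕ → ℝ := fun k => β k a * freudBracket (β · a) k with hc
  have hR' : ∀ k, 2 ≤ k → R k a = 6 * (c k + c (k + 1)) - 2 * k - 1 := by
    intro k hk
    rw [hR k hk]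
    simp only [hc, freudBracket, show k + 1 - 2 = k - 1 by omega, Nat.add_sub_cancel]
    ring
  intro n hn
  obtain ⟨m, rfl⟩ : ∃ m, n = m + 1 := ⟨n - 1, by omega⟩
  rw [htoda _ hn, Nat.add_sub_cancel,
    sub_succ_eq_of_eq_pairSum (r := (R · a)) (hR' m (by omega)) (hR' (m + 1) (by omega))]
  simp only [hc, freudBracket, show m + 1 - 2 = m - 1 by omega, show m + 1 - 3 = m - 2 by omega,
    show m + 2 - 2 = m by omega, show m + 2 - 1 = m + 1 by omega]
  ring

theorem stmt_14 (a : ℝ) (β R : ℕ → ℝ → ℝ)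
    (hβd : ∀ n : ℕ, Differentiable ℝ (β n))
    (htoda : ∀ n : ℕ, 3 ≤ n →
      a * deriv (β n) a = β n a * (R (n - 1) a - R n a))
    (hR : ∀ n : ℕ, 2 ≤ n →
      R n a = 6 * β n a * (β (n - 2) a * β (n - 1) a +
          (β n a + β (n + 1) a) ^ 2 +
          β (n - 1) a * (β (n - 1) a + 2 * β n a + β (n + 1) a) +
          β (n + 1) a * β (n + 2) a) +
        6 * β (n + 1) a * (β (n - 1) a * β n a +
          (β (n + 1) a + β (n + 2) a) ^ 2 +
          β n a * (β n a + 2 * β (n + 1) a + β (n + 2) a) +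
          β (n + 2) a * β (n + 3) a) - 2 * n - 1) :
    ∀ n : ℕ, 3 ≤ n →
      a * deriv (β n) a =
        2 * β n a *
          (3 * β (n - 1) a * (β (n - 3) a * β (n - 2) a +
              (β (n - 1) a + β n a) ^ 2 +
              β (n - 2) a * (β (n - 2) a + 2 * β (n - 1) a + β n a) +
              β n a * β (n + 1) a) -
            3 * β (n + 1) a * (β (n - 1) a * β n a +
              (β (n + 1) a + β (n + 2) a) ^ 2 +
              β n a * (β n a + 2 * β (n + 1) a + β (n + 2) a) +
              β (n + 2) a * β (n + 3) a) + 1) :=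
  stmt_14_general a β R htoda hR
end
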